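/- Let X ⊆ ℤ^d be lattice-convex and ε > 0. Suppose Q is an ε-relaxation of X, i.e., X + εD ⊆ Q and int(Q) ∩ ℤ^d = X, where εD = {0, ±εe_1, ..., ±εe_d}. Then for every q ∈ Q and v ∈ X, ‖v − q‖_∞ ≤ 2·d!·(|X|+1)/ε^{d−1}. In particular every ε-relaxation of X is bounded and contained in conv(X) + c·[−1,1]^d for c = 2·d!·(|X|+1)/ε^{d−1}. -/

import Mathlib

/-!
Fix `q ∈ Q`, `v ∈ X` and a coordinate `i`, and put `w = q - v`. The linear map `T` with
`T eᵢ = w` and `T eⱼ = ε eⱼ` for `j ≠ i` maps the open cross-polytope onto a centrally symmetric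
convex body `K` of volume `|wᵢ| ε^(d-1) 2^d / d!`. For `x` in the cross-polytope with `xᵢ ≥ 0`,
the point `v + T x` is a convex combination of `q`, the points `v ± ε eⱼ` and `v`, with positive
weight on `v ∈ int Q`, so it lies in `int Q`. Hence for every lattice point `z ∈ K` one of
`v ± z` lies in `int Q ∩ ℤ^d = X`, so `|K ∩ ℤ^d| ≤ 2|X|`, and van der Corput's inequality
`vol K ≤ 2^d |K ∩ ℤ^d|` bounds `|wᵢ|`.
-/

open MeasureTheory Set Module Finset
open scoped ENNReal Pointwise

def toR {d : ℕ} (z : Fin d → ℤ) : Fin d → ℝ := fun i => (z i : ℝ)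

theorem tsum_indicator_one_vadd {G E : Type*} [VAdd G E] (s : Set E) (x : E) :
    ∑' g : G, s.indicator (1 : E → ℝ≥0∞) (g +ᵥ x) = ({g : G | g +ᵥ x ∈ s}.encard : ℝ≥0∞) :=
  calc ∑' g : G, s.indicator 1 (g +ᵥ x) = ∑' g : G, {g : G | g +ᵥ x ∈ s}.indicator 1 g := rfl
    _ = _ := (_root_.tsum_subtype _ _).symm.trans (ENNReal.tsum_set_one _)

namespace MeasureTheory.IsAddFundamentalDomain

variable {E : Type*} [MeasurableSpace E] {μ : Measure E} {F s : Set E}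

theorem measure_le_mul_of_encard_vadd_mem_le {G : Type*} [AddGroup G] [Countable G]
    [MeasurableSpace G] [AddAction G E] [MeasurableVAdd G E] [VAddInvariantMeasure G E μ]
    (fund : IsAddFundamentalDomain G F μ)
    (hs : NullMeasurableSet s μ) {m : ℕ∞} (hm : ∀ x, {g : G | g +ᵥ x ∈ s}.encard ≤ m) :
    μ s ≤ m * μ F := by
  obtain ⟨t, hts, ht, hts_ae⟩ := hs.exists_measurable_subset_ae_eq
  calc μ s = μ t := (measure_congr hts_ae).symm
    _ = ∑' g : G, ∫⁻ x in F, t.indicator 1 (g +ᵥ x) ∂μ := by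
      rw [← lintegral_indicator_one ht, fund.lintegral_eq_tsum'']
    _ = ∫⁻ x in F, ({g : G | g +ᵥ x ∈ t}.encard : ℝ≥0∞) ∂μ := by
      rw [← lintegral_tsum (f := fun g x => t.indicator 1 (g +ᵥ x)) fun g =>
        ((measurable_one.indicator ht).comp (measurable_const_vadd g)).aemeasurable]
      simp_rw [tsum_indicator_one_vadd]
    _ ≤ ∫⁻ _ in F, (m : ℝ≥0∞) ∂μ := lintegral_mono fun x => ENat.toENNReal_le.2 <|
      (encard_le_encard (t := {g : G | g +ᵥ x ∈ s}) fun _ hg => hts hg).trans (hm x)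
    _ = m * μ F := setLIntegral_const F _

theorem measure_le_two_pow_mul_encard [NormedAddCommGroup E] [NormedSpace ℝ E] [BorelSpace E]
    [FiniteDimensional ℝ E] [μ.IsAddHaarMeasure] {L : AddSubgroup E} [Countable L]
    (fund : IsAddFundamentalDomain L F μ) (h_symm : ∀ x ∈ s, -x ∈ s) (h_conv : Convex ℝ s) :
    μ s ≤ 2 ^ finrank ℝ E * {ℓ : L | (ℓ : E) ∈ s}.encard * μ F := by
  have h_half : ∀ x, {ℓ : L | ℓ +ᵥ x ∈ (2⁻¹ : ℝ) • s}.encard ≤ {ℓ : L | (ℓ : E) ∈ s}.encard := by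
    intro x
    rcases eq_empty_or_nonempty {ℓ : L | ℓ +ᵥ x ∈ (2⁻¹ : ℝ) • s} with h | ⟨ℓ₀, hℓ₀⟩
    · simp [h]
    refine encard_le_encard_of_injOn (f := (· - ℓ₀)) (fun ℓ hℓ => ?_) sub_left_injective.injOn
    obtain ⟨a, ha, hax⟩ := mem_smul_set.1 hℓ
    obtain ⟨b, hb, hbx⟩ := mem_smul_set.1 hℓ₀
    have : ((ℓ - ℓ₀ : L) : E) = (2⁻¹ : ℝ) • a + (2⁻¹ : ℝ) • -b := by
      rw [smul_neg, ← sub_eq_add_neg, hax, hbx, AddSubgroup.vadd_def, AddSubgroup.vadd_def,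
        vadd_eq_add, vadd_eq_add, add_sub_add_right_eq_sub, AddSubgroup.coe_sub]
    show ((ℓ - ℓ₀ : L) : E) ∈ s
    rw [this]
    exact h_conv ha (h_symm b hb) (by norm_num) (by norm_num) (by norm_num)
  have h_vol : μ ((2⁻¹ : ℝ) • s) = (2 ^ finrank ℝ E)⁻¹ * μ s := by
    rw [Measure.addHaar_smul_of_nonneg μ (by norm_num), ENNReal.ofReal_pow (by norm_num),
      ENNReal.ofReal_inv_of_pos (by norm_num), ENNReal.inv_pow, ENNReal.ofReal_ofNat]
  have := fund.measure_le_mul_of_encard_vadd_mem_le ((h_conv.smul _).nullMeasurableSet _) h_half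
  rw [h_vol, ENNReal.inv_mul_le_iff (by positivity) (by simp)] at this
  rwa [← mul_assoc] at this

end MeasureTheory.IsAddFundamentalDomain

section

variable {E ι : Type*} [AddCommGroup E] [Module ℝ E] [Fintype ι] {C : Set E} {v : E}
  {u : ι → E} {a : ι → ℝ}

theorem Convex.add_sum_smul_mem (hC : Convex ℝ C) (hv : v ∈ C)
    (hpos : ∀ i, 0 < a i → v + u i ∈ C) (hneg : ∀ i, a i < 0 → v - u i ∈ C)
    (ha : ∑ i, |a i| ≤ 1) : v + ∑ i, a i • u i ∈ C := by
  -- a convex combination of `v` (weight `1 - ∑ i, |a i|`) and the `v ± u i` (weights `|a i|`)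
  have hvertex : ∀ i, v + (SignType.sign (a i) : ℝ) • u i ∈ C := by
    intro i
    rcases lt_trichotomy (a i) 0 with h | h | h
    · simpa [sign_neg h, ← sub_eq_add_neg] using hneg i h
    · simpa [h] using hv
    · simpa [sign_pos h] using hpos i h
  have := hC.sum_mem (t := (univ : Finset (Option ι)))
    (w := fun o => o.elim (1 - ∑ i, |a i|) fun i => |a i|)
    (z := fun o => o.elim v fun i => v + (SignType.sign (a i) : ℝ) • u i)
    (by rintro (_ | i) -; exacts [sub_nonneg.2 ha, abs_nonneg _])
    (by simp [Fintype.sum_option]) (by rintro (_ | i) -; exacts [hv, hvertex i])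
  convert this using 1
  simp only [Fintype.sum_option, Option.elim, smul_add, sum_add_distrib, smul_smul,
    abs_mul_sign, ← sum_smul]
  module

theorem Convex.add_sum_smul_mem_interior [TopologicalSpace E] [IsTopologicalAddGroup E]
    [ContinuousConstSMul ℝ E] (hC : Convex ℝ C) (hv : v ∈ interior C)
    (hpos : ∀ i, 0 < a i → v + u i ∈ C) (hneg : ∀ i, a i < 0 → v - u i ∈ C)
    (ha : ∑ i, |a i| < 1) : v + ∑ i, a i • u i ∈ interior C := by
  -- write the point as `(1 - θ) • v + θ • y` with `y ∈ C`, for some `θ ∈ (∑ i, |a i|, 1)`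
  set θ := (1 + ∑ i, |a i|) / 2 with hθ_def
  have hθ : 0 < θ := by positivity
  have hy : v + ∑ i, (a i / θ) • u i ∈ C := by
    refine hC.add_sum_smul_mem (interior_subset hv) (fun i hi => hpos i ?_)
      (fun i hi => hneg i ?_) ?_
    · exact (div_pos_iff_of_pos_right hθ).1 hi
    · simpa using (div_lt_iff₀ hθ).1 hi
    · simp_rw [abs_div, abs_of_pos hθ, ← sum_div]
      rw [div_le_one hθ]
      linarith
  convert hC.combo_interior_self_mem_interior hv hy (by linarith : 0 < 1 - θ) hθ.le
    (by ring) using 1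
  simp_rw [smul_add, smul_sum, smul_smul, mul_div_cancel₀ _ hθ.ne']
  module

end

theorem Matrix.det_updateCol_diagonal {n R : Type*} [Fintype n] [DecidableEq n] [CommRing R]
    (c : n → R) (i : n) (w : n → R) :
    ((Matrix.diagonal c).updateCol i w).det = w i * ∏ j ∈ univ.erase i, c j := by
  -- the second summand of `w` vanishes at `i`, so it produces a zero row `i`
  have hw : w = Pi.single i (w i) + (w - Pi.single i (w i)) := by abel
  have h_single : (Matrix.diagonal c).updateCol i (Pi.single i (w i)) =
      Matrix.diagonal (Function.update c i (w i)) := by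
    ext j k
    by_cases hk : k = i <;> by_cases hj : j = k <;> simp_all
  have h_zero : ((Matrix.diagonal c).updateCol i (w - Pi.single i (w i))).det = 0 :=
    Matrix.det_eq_zero_of_row_eq_zero i fun k => by
      by_cases hk : k = i <;> simp_all [eq_comm]
  conv_lhs => rw [hw]
  rw [Matrix.det_updateCol_add, h_zero, add_zero, h_single, Matrix.det_diagonal,
    prod_update_of_mem (mem_univ i), sdiff_singleton_eq_erase]

section

variable {ι : Type*} [Fintype ι]

def crossPolytope (ι : Type*) [Fintype ι] : Set (ι → ℝ) := {x | ∑ i, |x i| < 1}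

theorem neg_mem_crossPolytope {x : ι → ℝ} (hx : x ∈ crossPolytope ι) : -x ∈ crossPolytope ι := by
  simpa [crossPolytope] using hx

theorem convex_crossPolytope : Convex ℝ (crossPolytope ι) := by
  intro x hx y hy a b ha hb hab
  calc ∑ i, |a * x i + b * y i| ≤ ∑ i, (a * |x i| + b * |y i|) :=
        sum_le_sum fun i _ => (abs_add_le _ _).trans_eq <| by
          rw [abs_mul, abs_mul, abs_of_nonneg ha, abs_of_nonneg hb]
    _ = a * ∑ i, |x i| + b * ∑ i, |y i| := by rw [sum_add_distrib, mul_sum, mul_sum]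
    _ ≤ a * max (∑ i, |x i|) (∑ i, |y i|) + b * max (∑ i, |x i|) (∑ i, |y i|) := by
      gcongr
      exacts [le_max_left _ _, le_max_right _ _]
    _ < 1 := by rw [← add_mul, hab, one_mul]; exact max_lt hx hy

theorem volume_crossPolytope :
    volume (crossPolytope ι) =
      ENNReal.ofReal (2 ^ Fintype.card ι / (Fintype.card ι).factorial) := by
  have := volume_sum_rpow_lt_one ι (p := 1) le_rfl
  simp only [Real.rpow_one] at this
  rw [crossPolytope, this]
  norm_num [Real.Gamma_nat_eq_factorial]

variable [DecidableEq ι]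

noncomputable def crossMap (ε : ℝ) (i : ι) (w : ι → ℝ) : (ι → ℝ) →ₗ[ℝ] (ι → ℝ) :=
  Fintype.linearCombination ℝ (Function.update (fun j => Pi.single j ε) i w)

theorem det_crossMap (ε : ℝ) (i : ι) (w : ι → ℝ) :
    LinearMap.det (crossMap ε i w) = w i * ε ^ (Fintype.card ι - 1) := by
  have : LinearMap.toMatrix' (crossMap ε i w) = (Matrix.diagonal fun _ => ε).updateCol i w := by
    ext j k
    by_cases hk : k = i <;> simp [crossMap, hk, Matrix.diagonal_apply, Pi.single_apply]
  rw [← LinearMap.det_toMatrix', this, Matrix.det_updateCol_diagonal, prod_const,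
    card_erase_of_mem (mem_univ i), card_univ]

theorem volume_image_crossMap {ε : ℝ} (hε : 0 ≤ ε) (i : ι) (w : ι → ℝ) :
    volume (crossMap ε i w '' crossPolytope ι) = ENNReal.ofReal
      (|w i| * ε ^ (Fintype.card ι - 1) * (2 ^ Fintype.card ι / (Fintype.card ι).factorial)) := by
  rw [Measure.addHaar_image_linearMap, det_crossMap, volume_crossPolytope, abs_mul,
    abs_of_nonneg (pow_nonneg hε _), ← ENNReal.ofReal_mul (by positivity)]

end

theorem toR_add {d : ℕ} (a b : Fin d → ℤ) : toR (a + b) = toR a + toR b := by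
  ext; simp [toR]

theorem toR_sub {d : ℕ} (a b : Fin d → ℤ) : toR (a - b) = toR a - toR b := by
  ext; simp [toR]

theorem toR_eq_sum_smul_basisFun {d : ℕ} (z : Fin d → ℤ) :
    toR z = ∑ i, z i • Pi.basisFun ℝ (Fin d) i := by
  ext j; simp [toR, Finset.sum_apply, Pi.single_apply]

theorem toR_injective {d : ℕ} : Function.Injective (toR (d := d)) :=
  fun _ _ h => funext fun i => Int.cast_injective (congrFun h i)

theorem mem_span_basisFun_iff_exists_toR {d : ℕ} {x : Fin d → ℝ} :
    x ∈ Submodule.span ℤ (range (Pi.basisFun ℝ (Fin d))) ↔ ∃ z, toR z = x := by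
  simp_rw [Submodule.mem_span_range_iff_exists_fun, toR_eq_sum_smul_basisFun]

theorem volume_le_two_pow_mul_encard_intPoints {d : ℕ} {S : Set (Fin d → ℝ)}
    (h_symm : ∀ x ∈ S, -x ∈ S) (h_conv : Convex ℝ S) :
    volume S ≤ 2 ^ d * {z : Fin d → ℤ | toR z ∈ S}.encard := by
  set L := (Submodule.span ℤ (range (Pi.basisFun ℝ (Fin d)))).toAddSubgroup
  have : Countable L := inferInstanceAs (Countable (Submodule.span ℤ _))
  have h_vol : volume (ZSpan.fundamentalDomain (Pi.basisFun ℝ (Fin d))) = 1 := by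
    rw [ZSpan.fundamentalDomain_pi_basisFun, volume_pi_pi]; simp
  let f : (Fin d → ℤ) → L := fun z => ⟨toR z, mem_span_basisFun_iff_exists_toR.2 ⟨z, rfl⟩⟩
  have h_image : f '' {z | toR z ∈ S} = {ℓ : L | (ℓ : Fin d → ℝ) ∈ S} := by
    ext ℓ
    refine ⟨?_, fun hℓ => ?_⟩
    · rintro ⟨z, hz, rfl⟩; exact hz
    · obtain ⟨z, hz⟩ := mem_span_basisFun_iff_exists_toR.1 ℓ.2
      exact ⟨z, by simpa [hz] using hℓ, Subtype.ext hz⟩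
  have h_inj : Function.Injective f := fun z z' h => toR_injective (congrArg Subtype.val h)
  have := IsAddFundamentalDomain.measure_le_two_pow_mul_encard
    (ZSpan.isAddFundamentalDomain' (Pi.basisFun ℝ (Fin d)) volume) h_symm h_conv
  rwa [h_vol, mul_one, ← h_image, h_inj.injOn.encard_image, finrank_fin_fun] at this

section

variable {d : ℕ} {X : Set (Fin d → ℤ)} {Q : Set (Fin d → ℝ)} {ε : ℝ} {v : Fin d → ℤ}
  {i : Fin d} {w : Fin d → ℝ}

theorem add_crossMap_mem_interior (hQ : Convex ℝ Q) (hv : toR v ∈ interior Q)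
    (hw : toR v + w ∈ Q) (hvε : ∀ j, toR v + Pi.single j ε ∈ Q ∧ toR v - Pi.single j ε ∈ Q)
    {x : Fin d → ℝ} (hx : x ∈ crossPolytope (Fin d)) (hxi : 0 ≤ x i) :
    toR v + crossMap ε i w x ∈ interior Q := by
  refine hQ.add_sum_smul_mem_interior hv (fun j hj => ?_) (fun j hj => ?_) hx
  · by_cases hji : j = i
    · subst hji; simpa using hw
    · simpa [hji] using (hvε j).1
  · have hji : j ≠ i := by rintro rfl; linarith
    simpa [hji] using (hvε j).2

theorem encard_intPoints_crossMap_le (hQ : Convex ℝ Q) (hrelax : ∀ z, toR z ∈ interior Q → z ∈ X)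
    (hv : toR v ∈ interior Q) (hw : toR v + w ∈ Q)
    (hvε : ∀ j, toR v + Pi.single j ε ∈ Q ∧ toR v - Pi.single j ε ∈ Q) :
    {z : Fin d → ℤ | toR z ∈ crossMap ε i w '' crossPolytope (Fin d)}.encard ≤ 2 * X.encard := by
  have hsub : {z : Fin d → ℤ | toR z ∈ crossMap ε i w '' crossPolytope (Fin d)} ⊆
      (· - v) '' X ∪ (v - ·) '' X := by
    rintro z ⟨x, hx, hxz⟩
    rcases le_or_gt 0 (x i) with hxi | hxi
    · refine Or.inl ⟨v + z, hrelax _ ?_, add_sub_cancel_left v z⟩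
      rw [toR_add, ← hxz]
      exact add_crossMap_mem_interior hQ hv hw hvε hx hxi
    · refine Or.inr ⟨v - z, hrelax _ ?_, sub_sub_cancel v z⟩
      rw [toR_sub, ← hxz, sub_eq_add_neg, ← map_neg]
      exact add_crossMap_mem_interior hQ hv hw hvε (neg_mem_crossPolytope hx)
        (by simpa using hxi.le)
  calc _ ≤ ((· - v) '' X ∪ (v - ·) '' X).encard := encard_le_encard hsub
    _ ≤ ((· - v) '' X).encard + ((v - ·) '' X).encard := encard_union_le _ _
    _ ≤ X.encard + X.encard := add_le_add (encard_image_le _ _) (encard_image_le _ _)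
    _ = 2 * X.encard := (two_mul _).symm

end

theorem convex_setOf_sum_mul_le {m d : ℕ} (A : Fin m → Fin d → ℝ) (b : Fin m → ℝ) :
    Convex ℝ {x : Fin d → ℝ | ∀ i, ∑ j, A i j * x j ≤ b i} :=
  (convex_Iic b).linear_preimage (Matrix.of A).mulVecLin

theorem abs_sub_le_of_eps_relaxation {d : ℕ} {X : Set (Fin d → ℤ)} {Q : Set (Fin d → ℝ)}
    {ε : ℝ} (hX : X.Finite) (hε : 0 < ε) (hQ : Convex ℝ Q)
    (hin : ∀ v ∈ X, ∀ j, toR v + Pi.single j ε ∈ Q ∧ toR v - Pi.single j ε ∈ Q)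
    (hrelax : ∀ z, toR z ∈ interior Q ↔ z ∈ X) {q : Fin d → ℝ} (hq : q ∈ Q) {v : Fin d → ℤ}
    (hv : v ∈ X) (i : Fin d) :
    |q i - toR v i| ≤ 2 * d.factorial * X.ncard / ε ^ (d - 1) := by
  set K := crossMap ε i (q - toR v) '' crossPolytope (Fin d) with hK
  have h_symm : ∀ x ∈ K, -x ∈ K := by
    rintro _ ⟨x, hx, rfl⟩
    exact ⟨-x, neg_mem_crossPolytope hx, map_neg _ x⟩
  have h_count := encard_intPoints_crossMap_le (i := i) hQ (fun z => (hrelax z).1)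
    ((hrelax v).2 hv) (by rwa [add_sub_cancel]) (hin v hv)
  have h_vol : ENNReal.ofReal (|q i - toR v i| * ε ^ (d - 1) * (2 ^ d / d.factorial)) ≤
      ENNReal.ofReal (2 ^ d * (2 * X.ncard)) := by
    calc _ = volume K := by rw [hK, volume_image_crossMap hε.le, Fintype.card_fin]; rfl
      _ ≤ 2 ^ d * {z : Fin d → ℤ | toR z ∈ K}.encard :=
        volume_le_two_pow_mul_encard_intPoints h_symm (convex_crossPolytope.linear_image _)
      _ ≤ 2 ^ d * (2 * X.ncard : ℕ∞) := by
        rw [hX.cast_ncard_eq]; exact mul_le_mul_right (ENat.toENNReal_le.2 h_count) _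
      _ = _ := by
        rw [ENNReal.ofReal_mul (by positivity), ENNReal.ofReal_pow zero_le_two]
        simp
  rw [ENNReal.ofReal_le_ofReal_iff (by positivity), mul_div_assoc',
    div_le_iff₀ (by positivity)] at h_vol
  rw [le_div_iff₀ (by positivity)]
  nlinarith [pow_pos (two_pos : (0 : ℝ) < 2) d]

theorem eps_relaxation_bounded_general (d : ℕ) (X : Set (Fin d → ℤ))
    (hfin : X.Finite)
    (ε : ℝ) (hε : 0 < ε) (Q : Set (Fin d → ℝ))
    (m : ℕ) (A : Fin m → Fin d → ℝ) (b : Fin m → ℝ)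
    (hQ : Q = {x : Fin d → ℝ | ∀ i, ∑ j, A i j * x j ≤ b i})
    (hin : ∀ v ∈ X, toR v ∈ Q ∧ ∀ i : Fin d,
      toR v + Pi.single i ε ∈ Q ∧ toR v - Pi.single i ε ∈ Q)
    (hrelax : ∀ z : Fin d → ℤ, toR z ∈ interior Q ↔ z ∈ X) :
    ∀ q ∈ Q, ∀ v ∈ X,
      ‖toR v - q‖ ≤ 2 * (d.factorial : ℝ) * (X.ncard + 1) / ε ^ (d - 1) := by
  intro q hq v hv
  have hQ_conv : Convex ℝ Q := hQ ▸ convex_setOf_sum_mul_le A b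
  refine (pi_norm_le_iff_of_nonneg (by positivity)).2 fun i => ?_
  rw [Real.norm_eq_abs, Pi.sub_apply, abs_sub_comm]
  calc |q i - toR v i| ≤ 2 * d.factorial * X.ncard / ε ^ (d - 1) :=
        abs_sub_le_of_eps_relaxation hfin hε hQ_conv (fun v hv => (hin v hv).2) hrelax hq hv i
    _ ≤ 2 * d.factorial * (X.ncard + 1) / ε ^ (d - 1) := by gcongr; linarith

/-- every `ε`-relaxation `Q` (a polyhedron with `X + ε◊ ⊆ Q` and
`int(Q) ∩ ℤ^d = X`) satisfies `‖v − q‖_∞ ≤ 2·d!·(|X|+1)/ε^(d−1)` for all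
`q ∈ Q`, `v ∈ X`; in particular `Q` is bounded. -/
theorem eps_relaxation_bounded (d : ℕ) (hd : 0 < d) (X : Set (Fin d → ℤ))
    (hfin : X.Finite)
    (hX : ∀ z : Fin d → ℤ, toR z ∈ convexHull ℝ (toR '' X) ↔ z ∈ X)
    (hdim : affineSpan ℝ (toR '' X) = ⊤)
    (ε : ℝ) (hε : 0 < ε) (Q : Set (Fin d → ℝ))
    (m : ℕ) (A : Fin m → Fin d → ℝ) (b : Fin m → ℝ)
    (hQ : Q = {x : Fin d → ℝ | ∀ i, ∑ j, A i j * x j ≤ b i})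
    (hin : ∀ v ∈ X, toR v ∈ Q ∧ ∀ i : Fin d,
      toR v + Pi.single i ε ∈ Q ∧ toR v - Pi.single i ε ∈ Q)
    (hrelax : ∀ z : Fin d → ℤ, toR z ∈ interior Q ↔ z ∈ X) :
    ∀ q ∈ Q, ∀ v ∈ X,
      ‖toR v - q‖ ≤ 2 * (d.factorial : ℝ) * (X.ncard + 1) / ε ^ (d - 1) :=
  eps_relaxation_bounded_general d X hfin ε hε Q m A b hQ hin hrelax
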